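/- arXiv:2509.00363 — 2 statements merged into one kernel-verified Lean document; each statement's English description precedes it below -/
import Mathlib

section
/- For a discrete field K, the polynomial ring K[X] is ω-Noetherian. -/
/-!
Suppose a measure `μ : Submodule A M → ℕ` strictly decreases along every strict inclusion of a
nonzero submodule. Then a list with nonzero span is `μ (span)`-good: each extension either lies in
the span already, or enlarges it and so lowers `μ`. In `K[X]` the degree of a generator of an
ideal is such a measure, since a strictly larger ideal is generated by a proper divisor. After its
first nonzero entry a list is therefore `n`-good for some `n < ω`, and the empty list is `ω`-good.
-/

open Ordinal

/-- A list is good ((-1)-good) if it is nonempty and its last entry lies in the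
submodule generated by the preceding entries. -/
def GoodList (A : Type*) {M : Type*} [Ring A] [AddCommGroup M] [Module A M]
    (σ : List M) : Prop :=
  ∃ (l : List M) (x : M), σ = l ++ [x] ∧ x ∈ Submodule.span A {y | y ∈ l}

/-- A list `σ` is `α`-good if for every `x`, the appended list `σ.x` is either good
((-1)-good) or `β`-good for some ordinal `β < α`.  A module `M` is `α`-Noetherian
if the empty list `[] : List M` is `α`-good; a ring is `α`-Noetherian if it is
`α`-Noetherian as a left module over itself. -/
def AlphaGood (A : Type*) {M : Type*} [Ring A] [AddCommGroup M] [Module A M]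
    (α : Ordinal) (σ : List M) : Prop :=
  ∀ x : M, GoodList A (σ ++ [x]) ∨ ∃ (β : Ordinal) (_ : β < α), AlphaGood A β (σ ++ [x])
termination_by α

open Polynomial Submodule.IsPrincipal

section AlphaGood

variable {A M : Type*} [Ring A] [AddCommGroup M] [Module A M]

theorem goodList_append_singleton {σ : List M} {x : M} (hx : x ∈ Submodule.span A {y | y ∈ σ}) :
    GoodList A (σ ++ [x]) :=
  ⟨σ, x, rfl, hx⟩

theorem span_lt_span_append_singleton {σ : List M} {x : M}
    (hx : x ∉ Submodule.span A {y | y ∈ σ}) :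
    Submodule.span A {y | y ∈ σ} < Submodule.span A {y | y ∈ σ ++ [x]} := by
  refine SetLike.lt_iff_le_and_exists.mpr ⟨Submodule.span_mono fun y hy => ?_, x, ?_, hx⟩
  · exact List.mem_append_left _ hy
  · exact Submodule.subset_span (List.mem_append_right _ (List.mem_singleton_self x))

theorem alphaGood_of_strictAnti (μ : Submodule A M → ℕ)
    (hμ : ∀ N N', N ≠ ⊥ → N < N' → μ N' < μ N) {σ : List M}
    (hσ : Submodule.span A {y | y ∈ σ} ≠ ⊥) :
    AlphaGood A (μ (Submodule.span A {y | y ∈ σ})) σ := by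
  induction hn : μ (Submodule.span A {y | y ∈ σ}) using Nat.strong_induction_on
    generalizing σ with | _ n ih =>
  rw [AlphaGood]
  intro x
  by_cases hx : x ∈ Submodule.span A {y | y ∈ σ}
  · exact .inl (goodList_append_singleton hx)
  · have hlt := span_lt_span_append_singleton hx
    have hμlt := hn ▸ hμ _ _ hσ hlt
    exact .inr ⟨_, by exact_mod_cast hμlt, ih _ hμlt (ne_bot_of_gt hlt) rfl⟩

theorem alphaGood_nil_omega0_of_strictAnti (μ : Submodule A M → ℕ)
    (hμ : ∀ N N', N ≠ ⊥ → N < N' → μ N' < μ N) :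
    AlphaGood A Ordinal.omega0 ([] : List M) := by
  rw [AlphaGood]
  intro x
  by_cases hx : x = 0
  · exact .inl (goodList_append_singleton (hx ▸ Submodule.zero_mem _))
  · have hspan : Submodule.span A {y | y ∈ [] ++ [x]} ≠ ⊥ := by
      simpa only [List.nil_append, List.mem_singleton, Set.ofPred_eq_eq_singleton,
        Ne, Submodule.span_singleton_eq_bot] using hx
    exact .inr ⟨_, Ordinal.natCast_lt_omega0 _, alphaGood_of_strictAnti μ hμ hspan⟩

end AlphaGood

namespace Polynomial

variable {K : Type*} [Field K]

theorem natDegree_lt_natDegree_of_dvdNotUnit {p q : K[X]} (hpq : DvdNotUnit p q) (hq : q ≠ 0) :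
    p.natDegree < q.natDegree := by
  obtain ⟨hp, c, hc, rfl⟩ := hpq
  have hc0 : c ≠ 0 := right_ne_zero_of_mul hq
  have hcpos := natDegree_pos_iff_degree_pos.mpr (degree_pos_of_ne_zero_of_nonunit hc0 hc)
  rw [natDegree_mul hp hc0]
  omega

theorem natDegree_generator_lt_of_lt {I J : Ideal K[X]} (hI : I ≠ ⊥) (hIJ : I < J) :
    (generator J).natDegree < (generator I).natDegree := by
  rw [← Ideal.span_singleton_generator I, ← Ideal.span_singleton_generator J,
    Ideal.span_singleton_lt_span_singleton] at hIJ
  exact natDegree_lt_natDegree_of_dvdNotUnit hIJ (by rwa [Ne, ← eq_bot_iff_generator_eq_zero])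

end Polynomial

theorem polynomial_omega_noetherian_general (K : Type*) [Field K] :
    AlphaGood (Polynomial K) Ordinal.omega0 ([] : List (Polynomial K)) :=
  alphaGood_nil_omega0_of_strictAnti (fun I => (generator I).natDegree)
    fun _ _ => natDegree_generator_lt_of_lt

/-- For a discrete field `K`, the polynomial ring `K[X]` is `ω`-Noetherian. -/
theorem polynomial_omega_noetherian (K : Type*) [Field K] [DecidableEq K] :
    AlphaGood (Polynomial K) Ordinal.omega0 ([] : List (Polynomial K)) :=
  polynomial_omega_noetherian_general K
end

section
/- If M is an α-Euclidean module over a ring A, then M is α-Noetherian. -/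
open Ordinal

/-- `x : M` is `α`-Euclidean if for every `y : M` there is a `z` which is either
`(-1)`-Euclidean (i.e. `z = 0`) or `β`-Euclidean for some ordinal `β < α`, with
`z - y ∈ ⟨x⟩`.  A module is `α`-Euclidean if every element is `(-1)`-Euclidean
(i.e. zero) or `β`-Euclidean for some `β < α`; a ring is `α`-Euclidean if it is
so as a left module over itself. -/
def AlphaEuclidean (A : Type*) {M : Type*} [Ring A] [AddCommGroup M] [Module A M]
    (α : Ordinal) (x : M) : Prop :=
  ∀ y : M, (∃ z : M, z = 0 ∧ z - y ∈ Submodule.span A {x}) ∨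
    ∃ (β : Ordinal) (_ : β < α), ∃ z : M, AlphaEuclidean A β z ∧ z - y ∈ Submodule.span A {x}
termination_by α

/-!
Whether a list is `β`-good depends only on the submodule spanned by its entries. If `x` is
`β`-Euclidean, extend `σ.x` by any `y`: either `y ∈ ⟨x⟩`, so `σ.x.y` is good, or `y ≡ z`
modulo `⟨x⟩` for a `γ`-Euclidean `z` with `γ < β`. Then `σ.x.y` and `σ.x.z` span the same
submodule, and `σ.x.z` is `γ`-good by induction on `β`. So `σ.x` is `β`-good for every `σ`.
-/

open Submodule

section

variable {A M : Type*} [Ring A] [AddCommGroup M] [Module A M]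

lemma span_setOf_mem_append_singleton (σ : List M) (x : M) :
    span A {m | m ∈ σ ++ [x]} = A ∙ x ⊔ span A {m | m ∈ σ} := by
  rw [← span_insert]
  congr 1
  ext m
  simp [or_comm]

lemma span_singleton_sup_eq_of_sub_mem {N : Submodule A M} {y z : M} (h : y - z ∈ N) :
    A ∙ y ⊔ N = A ∙ z ⊔ N := by
  have key : ∀ {y z : M}, y - z ∈ N → A ∙ y ⊔ N ≤ A ∙ z ⊔ N := fun {y z} h ↦ by
    refine sup_le ((span_singleton_le_iff_mem _ _).2 ?_) le_sup_right
    rw [← sub_add_cancel y z, add_comm]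
    exact add_mem (mem_sup_left (mem_span_singleton_self z)) (mem_sup_right h)
  exact le_antisymm (key h) (key (by simpa using neg_mem h))

lemma goodList_append_singleton_iff {σ : List M} {x : M} :
    GoodList A (σ ++ [x]) ↔ x ∈ span A {m | m ∈ σ} := by
  constructor
  · rintro ⟨l, w, h, hw⟩
    obtain ⟨rfl, rfl⟩ := List.append_singleton_inj.1 h
    exact hw
  · exact fun h ↦ ⟨σ, x, rfl, h⟩

lemma alphaGood_iff_of_span_eq {β : Ordinal} {σ σ' : List M}
    (h : span A {m | m ∈ σ} = span A {m | m ∈ σ'}) :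
    AlphaGood A β σ ↔ AlphaGood A β σ' := by
  induction β using WellFoundedLT.induction generalizing σ σ' with
  | ind β IH =>
    have hx (x : M) : span A {m | m ∈ σ ++ [x]} = span A {m | m ∈ σ' ++ [x]} := by
      rw [span_setOf_mem_append_singleton, span_setOf_mem_append_singleton, h]
    rw [AlphaGood, AlphaGood]
    refine forall_congr' fun x ↦ ?_
    simp only [goodList_append_singleton_iff, h]
    exact or_congr_right <| exists_congr fun γ ↦ exists_congr fun hγ ↦ IH γ hγ (hx x)

lemma AlphaEuclidean.alphaGood_append_singleton {β : Ordinal} {x : M}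
    (hx : AlphaEuclidean A β x) (σ : List M) : AlphaGood A β (σ ++ [x]) := by
  induction β using WellFoundedLT.induction generalizing x σ with
  | ind β IH =>
    rw [AlphaEuclidean] at hx
    have hxσ : A ∙ x ≤ span A {m | m ∈ σ ++ [x]} := by
      rw [span_setOf_mem_append_singleton]
      exact le_sup_left
    rw [AlphaGood]
    intro y
    rcases hx y with ⟨_, rfl, hy⟩ | ⟨γ, hγ, z, hz, hzy⟩
    · left
      rw [goodList_append_singleton_iff]
      exact hxσ (by simpa using neg_mem hy)
    · right
      refine ⟨γ, hγ, (alphaGood_iff_of_span_eq ?_).2 (IH γ hγ hz (σ ++ [x]))⟩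
      rw [span_setOf_mem_append_singleton (σ ++ [x]) y,
        span_setOf_mem_append_singleton (σ ++ [x]) z]
      exact span_singleton_sup_eq_of_sub_mem (hxσ (by simpa using neg_mem hzy))

end

/-- Every `α`-Euclidean module is `α`-Noetherian. -/
theorem alphaNoetherian_of_alphaEuclidean {A M : Type*} [Ring A] [AddCommGroup M]
    [Module A M] (α : Ordinal)
    (hE : ∀ x : M, x = 0 ∨ ∃ (β : Ordinal) (_ : β < α), AlphaEuclidean A β x) :
    AlphaGood A α ([] : List M) := by
  rw [AlphaGood]
  intro x
  rcases hE x with rfl | ⟨β, hβ, hx⟩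
  · exact Or.inl (goodList_append_singleton_iff.2 (zero_mem _))
  · exact Or.inr ⟨β, hβ, hx.alphaGood_append_singleton []⟩
end
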